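/- arXiv:1312.4769 — 2 statements merged into one kernel-verified Lean document; each statement's English description precedes it below -/
import Mathlib

section
/- Let a = (t,u) be a d-admissible arc. A d-admissible arc b = (x,y) satisfies Ext^i(a,b) = 0 for all i ∈ {w, …, 0} if and only if either u < y < x < t, or both x and y lie outside the closed interval [u,t]. -/
/- Combinatorial model of the triangulated category `T_w` generated by a `w`-spherical
object (`w ≤ -1`), via `d`-admissible arcs of the ∞-gon, where `d = w - 1`,
`|d| = 1 - w`, `|w| = -w`. -/

namespace SphericalArcs

/-- An arc is a pair of integers `(t, u)`. -/
abbrev Arc : Type := ℤ × ℤ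

/-- `(t,u)` is a `d`-admissible arc: `t > u`, `t - u ≥ |d| - 1 = -w` and
`t - u ≡ -1 (mod |d|)`, i.e. `(1 - w) ∣ (t - u + 1)`. -/
def Adm (w : ℤ) (a : Arc) : Prop :=
  a.2 < a.1 ∧ -w ≤ a.1 - a.2 ∧ (1 - w) ∣ (a.1 - a.2 + 1)

/-- `k(t,u) = (t - u + 1) / |d|`. -/
def kk (w : ℤ) (a : Arc) : ℤ := (a.1 - a.2 + 1) / (1 - w)

/-- `c ∈ F⁺(a)`: `c = (x,y)` is `d`-admissible, `x = a.1 + i·d` for some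
`0 ≤ i ≤ k(a) - 1`, and `y ≤ a.2`. -/
def Fplus (w : ℤ) (a c : Arc) : Prop :=
  Adm w c ∧ (∃ i : ℤ, 0 ≤ i ∧ i ≤ kk w a - 1 ∧ c.1 = a.1 + i * (w - 1)) ∧ c.2 ≤ a.2

/-- `c ∈ F⁻(a)`: `c = (x,y)` is `d`-admissible, `y = a.2 - i·d` for some
`0 ≤ i ≤ k(a) - 1`, and `x ≥ a.1`. -/
def Fminus (w : ℤ) (a c : Arc) : Prop :=
  Adm w c ∧ (∃ i : ℤ, 0 ≤ i ∧ i ≤ kk w a - 1 ∧ c.2 = a.2 - i * (w - 1)) ∧ a.1 ≤ c.1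

/-- The Serre functor: `S(t,u) = (t - w, u - w)`. -/
def Serre (w : ℤ) (a : Arc) : Arc := (a.1 - w, a.2 - w)

/-- `Hom(a,c) ≠ 0` iff `c ∈ F⁺(a) ∪ F⁻(S(a))`. -/
def HomNe (w : ℤ) (a c : Arc) : Prop := Fplus w a c ∨ Fminus w (Serre w a) c

/-- `Ext^j(a,b) ≠ 0` iff `Hom(a, Σ^j b) ≠ 0`, where `Σ^j b = (b.1 - j, b.2 - j)`. -/
def ExtNe (w : ℤ) (j : ℤ) (a b : Arc) : Prop := HomNe w a (b.1 - j, b.2 - j)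

/-- Two arcs `(t,u)` and `(t',u')` cross if `u < u' < t < t'` or `u' < u < t' < t`. -/
def Cross (a b : Arc) : Prop :=
  (a.2 < b.2 ∧ b.2 < a.1 ∧ a.1 < b.1) ∨ (b.2 < a.2 ∧ a.2 < b.1 ∧ b.1 < a.1)

/-- Two arcs share a vertex if `{t,u} ∩ {t',u'} ≠ ∅`. -/
def ShareVertex (a b : Arc) : Prop :=
  a.1 = b.1 ∨ a.1 = b.2 ∨ a.2 = b.1 ∨ a.2 = b.2

/-- A `|w|`-Hom-configuration: a set `H` of `d`-admissible arcs such that a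
`d`-admissible arc `h` belongs to `H` iff `Ext^i(x,h) = 0` for every `x ∈ H` and
`i ∈ {w+1, …, -1}`, and `Ext^i(x,h) = 0` for every `x ∈ H \ {h}` and `i ∈ {0, w}`. -/
def IsHomConfig (w : ℤ) (H : Set Arc) : Prop :=
  (∀ h ∈ H, Adm w h) ∧
  ∀ h : Arc, Adm w h →
    (h ∈ H ↔
      (∀ x ∈ H, ∀ i : ℤ, w + 1 ≤ i → i ≤ -1 → ¬ ExtNe w i x h) ∧
      (∀ x ∈ H, x ≠ h → ¬ ExtNe w 0 x h ∧ ¬ ExtNe w w x h))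

/-- `v` is an isolated vertex of `H`: it is not an endpoint of any arc of `H`. -/
def Isolated (H : Set Arc) (v : ℤ) : Prop := ∀ a ∈ H, a.1 ≠ v ∧ a.2 ≠ v

/-- `a ∈ H` is an overarc of `v`: `a.2 < v < a.1`. -/
def IsOverarc (H : Set Arc) (a : Arc) (v : ℤ) : Prop := a ∈ H ∧ a.2 < v ∧ v < a.1

/-- `a` is the smallest overarc of `v` in `H`. -/
def IsSmallestOverarc (H : Set Arc) (a : Arc) (v : ℤ) : Prop :=
  IsOverarc H a v ∧ ∀ b : Arc, IsOverarc H b v → b.2 ≤ a.2 ∧ a.1 ≤ b.1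

/-- The set of isolated vertices of `H` having no overarc in `H`. -/
def NoOverarcIsolated (H : Set Arc) : Set ℤ :=
  {v | Isolated H v ∧ ∀ a : Arc, ¬ IsOverarc H a v}

/-- A left `|w|`-Riedtmann configuration. -/
def IsLeftRiedtmann (w : ℤ) (C : Set Arc) : Prop :=
  (∀ c ∈ C, Adm w c) ∧
  (∀ x ∈ C, ∀ y ∈ C, x ≠ y → ∀ i : ℤ, w ≤ i → i ≤ 0 → ¬ ExtNe w i x y) ∧
  ∀ z : Arc, Adm w z → ∃ x ∈ C, ∃ i : ℤ, w + 1 ≤ i ∧ i ≤ 0 ∧ ExtNe w i x z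

/-- A right `|w|`-Riedtmann configuration. -/
def IsRightRiedtmann (w : ℤ) (C : Set Arc) : Prop :=
  (∀ c ∈ C, Adm w c) ∧
  (∀ x ∈ C, ∀ y ∈ C, x ≠ y → ∀ i : ℤ, w ≤ i → i ≤ 0 → ¬ ExtNe w i x y) ∧
  ∀ z : Arc, Adm w z → ∃ x ∈ C, ∃ i : ℤ, w + 1 ≤ i ∧ i ≤ 0 ∧ ExtNe w i z x

/-! Write `a = (t,u)`, `b = (x,y)`. Some `Ext^i(a,b)`, `w ≤ i ≤ 0`, is nonzero exactly when a shift
`Σ^i b` lies in `F⁺(a)` or in `F⁻(S a)`. As `i` runs over `[w,0]` the shift runs through a full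
residue system mod `|d|`, so division with remainder picks the shift that puts the moving endpoint
on the lattice `t + ℤd` (resp. `u - w - ℤd`); the congruence `t - u ≡ x - y ≡ -1 (mod |d|)` then
forces the other endpoint onto the required side. This shows `F⁺(a)` is reached iff
`y ≤ u ≤ x ≤ t` and `F⁻(S a)` iff `t ≤ x` and `u ≤ y ≤ t`; the theorem describes the complement
of these two configurations. -/

section Perpendicular

variable {w : ℤ} {a b : Arc}

theorem exists_mul_add_of_dvd_sub {m K p g : ℤ} (hm : 0 < m) (hp : 0 ≤ p) (hpK : p < m * K)
    (hg : 0 ≤ g) (hdvd : m ∣ g - p) :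
    ∃ q r, 0 ≤ q ∧ q < K ∧ 0 ≤ r ∧ r < m ∧ p = m * q + r ∧ r ≤ g := by
  have hdiv := Int.mul_ediv_add_emod p m
  have hr0 : 0 ≤ p % m := Int.emod_nonneg _ hm.ne'
  have hrm : p % m < m := Int.emod_lt_of_pos _ hm
  refine ⟨p / m, p % m, Int.ediv_nonneg hp hm.le, Int.ediv_lt_of_lt_mul hm (by linarith),
    hr0, hrm, hdiv.symm, ?_⟩
  -- `g - p % m` is a multiple of `m` exceeding `-m`, hence nonnegative.
  obtain ⟨c, hc⟩ : m ∣ g - p % m := by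
    rw [show g - p % m = (g - p) + m * (p / m) by linarith]
    exact dvd_add hdvd (dvd_mul_right _ _)
  have hc0 : 0 ≤ c := by
    by_contra! h
    nlinarith
  nlinarith

theorem Adm.mul_kk (ha : Adm w a) : (1 - w) * kk w a = a.1 - a.2 + 1 :=
  Int.mul_ediv_cancel' ha.2.2

theorem Adm.sub (hb : Adm w b) (e : ℤ) : Adm w (b.1 - e, b.2 - e) := by
  simpa only [Adm, sub_sub_sub_cancel_right, sub_lt_sub_iff_right] using hb

theorem Adm.dvd_length_sub (ha : Adm w a) (hb : Adm w b) :
    (1 - w) ∣ (b.1 - b.2) - (a.1 - a.2) := by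
  simpa only [add_sub_add_right_eq_sub] using dvd_sub hb.2.2 ha.2.2

theorem kk_serre : kk w (Serre w a) = kk w a := by
  simp only [kk, Serre, sub_sub_sub_cancel_right]

theorem exists_fplus_sub_iff (hw : w ≤ 0) (ha : Adm w a) (hb : Adm w b) :
    (∃ i, w ≤ i ∧ i ≤ 0 ∧ Fplus w a (b.1 - i, b.2 - i)) ↔
      b.2 ≤ a.2 ∧ a.2 ≤ b.1 ∧ b.1 ≤ a.1 := by
  have hk := ha.mul_kk
  constructor
  · rintro ⟨i, hwi, hi0, -, ⟨j, hj0, hjk, hx⟩, hy⟩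
    dsimp only at hx hy
    refine ⟨by omega, ?_, ?_⟩
    · linarith [mul_nonneg (sub_nonneg.2 hjk) (sub_nonneg.2 (show w ≤ 1 by omega))]
    · linarith [mul_nonneg hj0 (sub_nonneg.2 (show w ≤ 1 by omega))]
  · rintro ⟨hyu, hux, hxt⟩
    obtain ⟨q, r, hq0, hqk, hr0, hrm, hp, hrg⟩ :=
      exists_mul_add_of_dvd_sub (m := 1 - w) (K := kk w a) (p := a.1 - b.1) (g := a.2 - b.2)
        (by omega) (by omega) (by linarith) (by omega)
        (by convert ha.dvd_length_sub hb using 1; ring)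
    exact ⟨-r, by omega, by omega, hb.sub _, ⟨q, hq0, by omega, by dsimp only; linarith⟩,
      by dsimp only; omega⟩

theorem exists_fminus_serre_sub_iff (hw : w ≤ 0) (ha : Adm w a) (hb : Adm w b) :
    (∃ i, w ≤ i ∧ i ≤ 0 ∧ Fminus w (Serre w a) (b.1 - i, b.2 - i)) ↔
      a.1 ≤ b.1 ∧ a.2 ≤ b.2 ∧ b.2 ≤ a.1 := by
  have hk := ha.mul_kk
  rw [← kk_serre (w := w)] at hk
  constructor
  · rintro ⟨i, hwi, hi0, -, ⟨j, hj0, hjk, hy⟩, hx⟩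
    dsimp only [Serre] at hx hy
    refine ⟨by omega, ?_, ?_⟩
    · linarith [mul_nonneg hj0 (sub_nonneg.2 (show w ≤ 1 by omega))]
    · linarith [mul_nonneg (sub_nonneg.2 hjk) (sub_nonneg.2 (show w ≤ 1 by omega))]
  · rintro ⟨htx, huy, hyt⟩
    obtain ⟨q, s, hq0, hqk, hs0, hsm, hp, hsg⟩ :=
      exists_mul_add_of_dvd_sub (m := 1 - w) (K := kk w (Serre w a)) (p := b.2 - a.2)
        (g := b.1 - a.1) (by omega) (by omega) (by linarith) (by omega)
        (by convert ha.dvd_length_sub hb using 1; ring)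
    exact ⟨s + w, by omega, by omega, hb.sub _,
      ⟨q, hq0, by omega, by dsimp only [Serre]; linarith⟩, by dsimp only [Serre]; omega⟩

theorem exists_extNe_iff (hw : w ≤ 0) (ha : Adm w a) (hb : Adm w b) :
    (∃ i, w ≤ i ∧ i ≤ 0 ∧ ExtNe w i a b) ↔
      (b.2 ≤ a.2 ∧ a.2 ≤ b.1 ∧ b.1 ≤ a.1) ∨ (a.1 ≤ b.1 ∧ a.2 ≤ b.2 ∧ b.2 ≤ a.1) := by
  simp only [ExtNe, HomNe, and_or_left, exists_or]
  exact or_congr (exists_fplus_sub_iff hw ha hb) (exists_fminus_serre_sub_iff hw ha hb)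

end Perpendicular

/-- Theorem 5.1 (description of the perpendicular category `a^⊥`): a `d`-admissible
arc `b = (x,y)` satisfies `Ext^i(a,b) = 0` for all `i ∈ {w, …, 0}` iff either
`u < y < x < t`, or both `x` and `y` lie outside the closed interval `[u,t]`. -/
theorem stmt11 (w : ℤ) (hw : w ≤ -1) (a b : Arc) (ha : Adm w a) (hb : Adm w b) :
    (∀ i : ℤ, w ≤ i → i ≤ 0 → ¬ ExtNe w i a b) ↔
      ((a.2 < b.2 ∧ b.2 < b.1 ∧ b.1 < a.1) ∨
       ((b.1 < a.2 ∨ a.1 < b.1) ∧ (b.2 < a.2 ∨ a.1 < b.2))) := by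
  have hba := hb.1
  have hExt := exists_extNe_iff (by omega) ha hb
  have hNot : (∀ i : ℤ, w ≤ i → i ≤ 0 → ¬ ExtNe w i a b) ↔
      ¬ ∃ i, w ≤ i ∧ i ≤ 0 ∧ ExtNe w i a b := by
    simp only [not_exists, not_and]
  rw [hNot, hExt]
  omega

end SphericalArcs
end

section
/- The map f restricts to a bijection from the set of |−1|-Riedtmann configurations onto the set of noncrossing partitions of ℤ whose infinite block, if it exists, is bounded neither above nor below. -/
/- The case `w = -1`, `d = -2`: arcs of the ∞-gon with odd positive length, and
noncrossing partitions of `ℤ`. -/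

namespace NegOneCY

/-- A `(-2)`-admissible arc: a pair of integers `(t,u)` with `t - u` positive and
odd. -/
def Arcm1 (a : ℤ × ℤ) : Prop := 0 < a.1 - a.2 ∧ Odd (a.1 - a.2)

/-- Arcs `(t,u)` and `(t',u')` cross if `u < u' < t < t'` or `u' < u < t' < t`. -/
def Cross (a b : ℤ × ℤ) : Prop :=
  (a.2 < b.2 ∧ b.2 < a.1 ∧ a.1 < b.1) ∨ (b.2 < a.2 ∧ a.2 < b.1 ∧ b.1 < a.1)

/-- Arcs share a vertex if `{t,u} ∩ {t',u'} ≠ ∅`. -/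
def ShareVertex (a b : ℤ × ℤ) : Prop :=
  a.1 = b.1 ∨ a.1 = b.2 ∨ a.2 = b.1 ∨ a.2 = b.2

/-- A collection of admissible arcs, pairwise noncrossing and pairwise sharing no
vertex. -/
def NCColl (H : Set (ℤ × ℤ)) : Prop :=
  (∀ a ∈ H, Arcm1 a) ∧ ∀ a ∈ H, ∀ b ∈ H, a ≠ b → ¬ Cross a b ∧ ¬ ShareVertex a b

/-- A `|-1|`-Hom-configuration: a maximal such collection. -/
def HomConfigM1 (H : Set (ℤ × ℤ)) : Prop :=
  NCColl H ∧ ∀ H' : Set (ℤ × ℤ), NCColl H' → H ⊆ H' → H' = H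

/-- `P` is a partition of `ℤ`: a set of pairwise disjoint nonempty blocks whose union
is all of `ℤ`. -/
def IsPartition (P : Set (Set ℤ)) : Prop :=
  (∀ B ∈ P, B.Nonempty) ∧ ∀ z : ℤ, ∃! B : Set ℤ, B ∈ P ∧ z ∈ B

/-- `P` is noncrossing: there are no `a < b < c < d` with `a, c` in one block and
`b, d` in a different block. -/
def Noncrossing (P : Set (Set ℤ)) : Prop :=
  ¬ ∃ a b c d : ℤ, a < b ∧ b < c ∧ c < d ∧
    ∃ B ∈ P, ∃ B' ∈ P, B ≠ B' ∧ a ∈ B ∧ c ∈ B ∧ b ∈ B' ∧ d ∈ B'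

/-- `f(H)`: the partition of `ℤ` into the equivalence classes of the equivalence
relation generated by `n ~ p` whenever the arc `(2p, 2n+1)` belongs to `H`. -/
def fmap (H : Set (ℤ × ℤ)) : Set (Set ℤ) :=
  {B | ∃ x : ℤ,
    B = {y | Relation.EqvGen (fun n p => ((2 * p, 2 * n + 1) : ℤ × ℤ) ∈ H) x y}}

/-- `v` is an isolated vertex of `H`: it is not an endpoint of any arc of `H`. -/
def Isolated (H : Set (ℤ × ℤ)) (v : ℤ) : Prop := ∀ a ∈ H, a.1 ≠ v ∧ a.2 ≠ v

/-- A `|-1|`-Riedtmann configuration: a `|-1|`-Hom-configuration in which every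
isolated vertex has an overarc. -/
def RiedtmannM1 (H : Set (ℤ × ℤ)) : Prop :=
  HomConfigM1 H ∧ ∀ v : ℤ, Isolated H v → ∃ a ∈ H, a.2 < v ∧ v < a.1

-- ## Auxiliary definitions

/-- The relation `n ~ p` whenever the arc `(2p, 2n+1)` belongs to `H`. -/
def REdge (H : Set (ℤ × ℤ)) (n p : ℤ) : Prop := ((2 * p, 2 * n + 1) : ℤ × ℤ) ∈ H

/-- The generated equivalence relation. -/
def EqvR (H : Set (ℤ × ℤ)) : ℤ → ℤ → Prop := Relation.EqvGen (REdge H)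

lemma EqvR.symm' {H : Set (ℤ × ℤ)} {x y : ℤ} (h : EqvR H x y) : EqvR H y x :=
  Relation.EqvGen.symm _ _ h

lemma EqvR.trans' {H : Set (ℤ × ℤ)} {x y z : ℤ} (h : EqvR H x y) (h' : EqvR H y z) :
    EqvR H x z := Relation.EqvGen.trans _ _ _ h h'

lemma EqvR.rel' {H : Set (ℤ × ℤ)} {x y : ℤ} (h : REdge H x y) : EqvR H x y :=
  Relation.EqvGen.rel _ _ h

lemma EqvR.refl' {H : Set (ℤ × ℤ)} {x : ℤ} : EqvR H x x := Relation.EqvGen.refl x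

lemma Cross.symm' {a b : ℤ × ℤ} (h : Cross a b) : Cross b a := h.elim Or.inr Or.inl

lemma ShareVertex.symm' {a b : ℤ × ℤ} (h : ShareVertex a b) : ShareVertex b a := by
  unfold ShareVertex at *; omega

lemma mem_of_compatible {H : Set (ℤ × ℤ)} (hH : HomConfigM1 H) (x : ℤ × ℤ)
    (hx : Arcm1 x) (hc : ∀ b ∈ H, ¬ Cross x b ∧ ¬ ShareVertex x b) : x ∈ H := by
  have key : insert x H = H := by
    apply hH.2 (insert x H) ?_ (Set.subset_insert _ _)
    constructor
    · rintro a (rfl | ha)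
      · exact hx
      · exact hH.1.1 a ha
    · rintro a (rfl | ha) b (rfl | hb) hne
      · exact absurd rfl hne
      · exact hc b hb
      · exact ⟨fun h => (hc a ha).1 h.symm', fun h => (hc a ha).2 h.symm'⟩
      · exact hH.1.2 a ha b hb hne
  rw [← key]; exact Set.mem_insert _ _

lemma arc_pos {H : Set (ℤ × ℤ)} (hH : NCColl H) {a : ℤ × ℤ} (ha : a ∈ H) :
    0 < a.1 - a.2 := (hH.1 a ha).1

lemma arc_odd {H : Set (ℤ × ℤ)} (hH : NCColl H) {a : ℤ × ℤ} (ha : a ∈ H) :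
    (a.1 - a.2) % 2 = 1 := Int.odd_iff.mp (hH.1 a ha).2

-- ## The sweep lemmas

lemma sweepR {H : Set (ℤ × ℤ)} (hH : HomConfigM1 H) {v u t : ℤ} (hv : Isolated H v)
    (ha : ((t, u) : ℤ × ℤ) ∈ H) (h1 : u < v) (h2 : v < t)
    (hinn : ∀ c ∈ H, c.2 < v → v < c.1 → c = ((t, u) : ℤ × ℤ) ∨ (c.2 < u ∧ t < c.1)) :
    ∀ k : ℕ, ∀ x : ℤ, (t - x).toNat = k → v < x → x ≤ t → (x - v) % 2 = 1 →
      (∀ z, v < z → z < x → ∃ c ∈ H, v < c.2 ∧ c.2 ≤ z ∧ z ≤ c.1 ∧ c.1 < x) →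
      (t - v) % 2 = 1 := by
  intro k
  induction k using Nat.strong_induction_on with
  | _ k ih =>
    intro x hk hvx hxt hpar htile
    rcases eq_or_lt_of_le hxt with rfl | hxt'
    · exact hpar
    by_cases hend : ∃ c ∈ H, c.1 = x ∨ c.2 = x
    · obtain ⟨c, hc, hcase⟩ := hend
      rcases hcase with htop | hbot
      · -- x is a top : impossible
        exfalso
        have hcv := hv c hc
        have hcpos := arc_pos hH.1 hc
        rcases lt_trichotomy c.2 v with h' | h' | h'
        · -- c is an overarc of v with top x ≤ t, c ≠ (t,u)
          rcases hinn c hc h' (by omega) with rfl | hout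
          · simp at htop; omega
          · omega
        · exact hcv.2 h'
        · -- c.2 ∈ (v, x) : tile it
          obtain ⟨c', hc', hd1, hd2, hd3, hd4⟩ := htile c.2 h' (by omega)
          have hne : c ≠ c' := by intro hh; rw [hh] at htop; omega
          have hp := hH.1.2 c hc c' hc' hne
          simp only [Cross, ShareVertex, not_or] at hp
          omega
      · -- x is a bottom: move to c.1 + 1
        have hcpos := arc_pos hH.1 hc
        have hcodd := arc_odd hH.1 hc
        have hcne : c ≠ ((t, u) : ℤ × ℤ) := by
          intro hh; rw [hh] at hbot; simp at hbot
          have := hv ((t,u) : ℤ × ℤ) (hh ▸ hc)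
          simp at this; omega
        have hp := hH.1.2 c hc _ ha hcne
        simp only [Cross, ShareVertex, not_or] at hp
        -- derive c.1 < t
        have hct : c.1 < t := by omega
        apply ih (t - (c.1 + 1)).toNat (by omega) (c.1 + 1) rfl (by omega) (by omega)
          (by omega)
        intro z hz1 hz2
        by_cases hzx : z < x
        · obtain ⟨c'', h1, h2, h3, h4, h5⟩ := htile z hz1 hzx
          exact ⟨c'', h1, h2, h3, h4, by omega⟩
        · exact ⟨c, hc, by omega, by omega, by omega, by omega⟩
    · -- x is isolated: the arc (x, v) can be added, contradiction
      exfalso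
      push_neg at hend
      have hmem : ((x, v) : ℤ × ℤ) ∈ H := by
        apply mem_of_compatible hH
        · exact ⟨by simpa using hvx, by rw [Int.odd_iff]; simpa using hpar⟩
        · intro b hb
          have hbv := hv b hb
          have hbx := hend b hb
          constructor
          · intro hcross
            simp only [Cross] at hcross
            rcases hcross with ⟨hb1, hb2, hb3⟩ | ⟨hb1, hb2, hb3⟩
            · -- v < b.2 < x < b.1
              obtain ⟨c', hc', hd1, hd2, hd3, hd4⟩ := htile b.2 hb1 hb2
              have hne : b ≠ c' := by intro hh; rw [hh] at hb3; omega
              have hp := hH.1.2 b hb c' hc' hne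
              simp only [Cross, ShareVertex, not_or] at hp
              omega
            · -- b.2 < v < b.1 < x : b is an overarc of v
              rcases hinn b hb hb1 hb2 with rfl | hout
              · simp at hb3; omega
              · omega
          · intro hshare
            simp only [ShareVertex] at hshare
            omega
      have := hv _ hmem
      simp at this

lemma sweepL {H : Set (ℤ × ℤ)} (hH : HomConfigM1 H) {v u t : ℤ} (hv : Isolated H v)
    (ha : ((t, u) : ℤ × ℤ) ∈ H) (h1 : u < v) (h2 : v < t)
    (hinn : ∀ c ∈ H, c.2 < v → v < c.1 → c = ((t, u) : ℤ × ℤ) ∨ (c.2 < u ∧ t < c.1)) :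
    ∀ k : ℕ, ∀ x : ℤ, (x - u).toNat = k → u ≤ x → x < v → (v - x) % 2 = 1 →
      (∀ z, x < z → z < v → ∃ c ∈ H, c.1 < v ∧ x < c.2 ∧ c.2 ≤ z ∧ z ≤ c.1) →
      (v - u) % 2 = 1 := by
  intro k
  induction k using Nat.strong_induction_on with
  | _ k ih =>
    intro x hk hux hxv hpar htile
    rcases eq_or_lt_of_le hux with rfl | hux'
    · exact hpar
    by_cases hend : ∃ c ∈ H, c.1 = x ∨ c.2 = x
    · obtain ⟨c, hc, hcase⟩ := hend
      rcases hcase with htop | hbot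
      · -- x is a top: move to c.2 - 1
        have hcpos := arc_pos hH.1 hc
        have hcodd := arc_odd hH.1 hc
        have hcne : c ≠ ((t, u) : ℤ × ℤ) := by
          intro hh; rw [hh] at htop; simp at htop; omega
        have hp := hH.1.2 c hc _ ha hcne
        simp only [Cross, ShareVertex, not_or] at hp
        have hcu : u < c.2 := by omega
        apply ih (c.2 - 1 - u).toNat (by omega) (c.2 - 1) rfl (by omega) (by omega)
          (by omega)
        intro z hz1 hz2
        by_cases hzx : x < z
        · obtain ⟨c'', h1, h2, h3, h4, h5⟩ := htile z hzx hz2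
          exact ⟨c'', h1, h2, by omega, h4, h5⟩
        · exact ⟨c, hc, by omega, by omega, by omega, by omega⟩
      · -- x is a bottom: impossible
        exfalso
        have hcv := hv c hc
        have hcpos := arc_pos hH.1 hc
        rcases lt_trichotomy c.1 v with h' | h' | h'
        · -- c.1 ∈ (x, v): tile it
          obtain ⟨c', hc', hd1, hd2, hd3, hd4⟩ := htile c.1 (by omega) h'
          have hne : c ≠ c' := by intro hh; rw [hh] at hbot; omega
          have hp := hH.1.2 c hc c' hc' hne
          simp only [Cross, ShareVertex, not_or] at hp
          omega
        · exact hcv.1 h'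
        · rcases hinn c hc (by omega) h' with rfl | hout
          · simp at hbot; omega
          · omega
    · exfalso
      push_neg at hend
      have hmem : ((v, x) : ℤ × ℤ) ∈ H := by
        apply mem_of_compatible hH
        · exact ⟨by simpa using hxv, by rw [Int.odd_iff]; simpa using hpar⟩
        · intro b hb
          have hbv := hv b hb
          have hbx := hend b hb
          constructor
          · intro hcross
            simp only [Cross] at hcross
            rcases hcross with ⟨hb1, hb2, hb3⟩ | ⟨hb1, hb2, hb3⟩
            · -- x < b.2 < v < b.1 : b is an overarc of v
              rcases hinn b hb hb2 hb3 with rfl | hout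
              · simp at hb1; omega
              · omega
            · -- b.2 < x < b.1 < v : tile b.1
              obtain ⟨c', hc', hd1, hd2, hd3, hd4⟩ := htile b.1 hb2 hb3
              have hne : b ≠ c' := by intro hh; rw [hh] at hb1; omega
              have hp := hH.1.2 b hb c' hc' hne
              simp only [Cross, ShareVertex, not_or] at hp
              omega
          · intro hshare
            simp only [ShareVertex] at hshare
            omega
      have := hv _ hmem
      simp at this

lemma no_overarc {H : Set (ℤ × ℤ)} (hH : HomConfigM1 H) {v : ℤ} (hv : Isolated H v) :
    ∀ k : ℕ, ∀ a ∈ H, a.2 < v → v < a.1 → (a.1 - a.2).toNat = k → False := by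
  intro k
  induction k using Nat.strong_induction_on with
  | _ k ih =>
    intro a ha h1 h2 hk
    by_cases hinner : ∃ c ∈ H, c ≠ a ∧ c.2 < v ∧ v < c.1 ∧ a.2 < c.2
    · obtain ⟨c, hc, hne, hc1, hc2, hc3⟩ := hinner
      have hp := hH.1.2 c hc a ha hne
      simp only [Cross, ShareVertex, not_or] at hp
      have hct : c.1 < a.1 := by omega
      exact ih (c.1 - c.2).toNat (by have := arc_pos hH.1 hc; omega) c hc hc1 hc2 rfl
    · push_neg at hinner
      have hinn : ∀ c ∈ H, c.2 < v → v < c.1 → c = ((a.1, a.2) : ℤ × ℤ) ∨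
          (c.2 < a.2 ∧ a.1 < c.1) := by
        intro c hc hc1 hc2
        by_cases hce : c = a
        · left; rw [hce]
        · right
          have hlt := hinner c hc hce hc1 hc2
          have hp := hH.1.2 c hc a ha hce
          simp only [Cross, ShareVertex, not_or] at hp
          omega
      have ha' : ((a.1, a.2) : ℤ × ℤ) ∈ H := by simpa using ha
      have hR := sweepR hH hv ha' h1 h2 hinn (a.1 - (v+1)).toNat (v+1) rfl (by omega)
        (by omega) (by omega) (by intro z hz1 hz2; exact absurd hz1 (by omega))
      have hL := sweepL hH hv ha' h1 h2 hinn ((v-1) - a.2).toNat (v-1) rfl (by omega)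
        (by omega) (by omega) (by intro z hz1 hz2; exact absurd hz1 (by omega))
      have := arc_odd hH.1 ha
      omega


-- ## Characterization of Riedtmann configurations

/-- Every integer is an endpoint. -/
def Pfct (H : Set (ℤ × ℤ)) : Prop := ∀ v : ℤ, ∃ a ∈ H, a.1 = v ∨ a.2 = v

lemma perfect_of_riedtmann {H : Set (ℤ × ℤ)} (h : RiedtmannM1 H) : Pfct H := by
  intro v
  by_contra hcon
  push_neg at hcon
  have hiso : Isolated H v := by
    intro a ha
    have := hcon a ha
    tauto
  obtain ⟨a, ha, ha1, ha2⟩ := h.2 v hiso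
  exact no_overarc h.1 hiso (a.1 - a.2).toNat a ha ha1 ha2 rfl

lemma riedtmann_of_perfect {H : Set (ℤ × ℤ)} (h1 : NCColl H) (h2 : Pfct H) :
    RiedtmannM1 H := by
  constructor
  · refine ⟨h1, fun H' hH' hsub => ?_⟩
    apply Set.Subset.antisymm _ hsub
    intro x hx
    by_contra hxn
    obtain ⟨a, ha, hcase⟩ := h2 x.1
    have hne : x ≠ a := by intro hh; rw [hh] at hxn; exact hxn ha
    have := (hH'.2 x hx a (hsub ha) hne).2
    exact this (by unfold ShareVertex; omega)
  · intro v hiso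
    obtain ⟨a, ha, hcase⟩ := h2 v
    have := hiso a ha
    exact absurd hcase (by tauto)

-- ## Closure lemmas

lemma closed_even {H : Set (ℤ × ℤ)} (hH : NCColl H) {e f : ℤ} (hef : REdge H e f)
    {x y : ℤ} (hxy : EqvR H x y) : (e < x ∧ x < f) ↔ (e < y ∧ y < f) := by
  induction hxy with
  | rel a b hab =>
    have hb := hH.1 _ hab
    have he' := hH.1 _ hef
    simp only [Arcm1] at hb he'
    have hb1 := hb.1
    have he1 := he'.1
    by_cases hsame : a = e ∧ b = f
    · omega
    · have hne : ((2*b, 2*a+1) : ℤ × ℤ) ≠ (2*f, 2*e+1) := by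
        intro hh
        rw [Prod.mk.injEq] at hh
        omega
      have hp := hH.2 _ hab _ hef hne
      simp only [Cross, ShareVertex, not_or] at hp
      omega
  | refl a => exact Iff.rfl
  | symm a b h ihh => exact ihh.symm
  | trans a b c h1 h2 ih1 ih2 => exact ih1.trans ih2

lemma closed_odd {H : Set (ℤ × ℤ)} (hH : NCColl H) {m q : ℤ}
    (hB : ((2*q+1, 2*m) : ℤ × ℤ) ∈ H) {x y : ℤ} (hxy : EqvR H x y) :
    (m ≤ x ∧ x ≤ q) ↔ (m ≤ y ∧ y ≤ q) := by
  induction hxy with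
  | rel a b hab =>
    have hb := hH.1 _ hab
    have he' := hH.1 _ hB
    simp only [Arcm1] at hb he'
    have hb1 := hb.1
    have he1 := he'.1
    have hne : ((2*b, 2*a+1) : ℤ × ℤ) ≠ (2*q+1, 2*m) := by
      intro hh
      rw [Prod.mk.injEq] at hh
      omega
    have hp := hH.2 _ hab _ hB hne
    simp only [Cross, ShareVertex, not_or] at hp
    omega
  | refl a => exact Iff.rfl
  | symm a b h ihh => exact ihh.symm
  | trans a b c h1 h2 ih1 ih2 => exact ih1.trans ih2

lemma redge_lt {H : Set (ℤ × ℤ)} (hH : NCColl H) {e f : ℤ} (hef : REdge H e f) :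
    e < f := by
  have := (hH.1 _ hef).1
  simp only at this
  omega

-- ## The straddle lemma

lemma straddle {H : Set (ℤ × ℤ)} (hH : NCColl H) {x y : ℤ} (hxy : EqvR H x y) :
    ∀ z, ((x < z ∧ z < y) ∨ (y < z ∧ z < x)) → ¬ EqvR H x z →
    ∃ e g, REdge H e g ∧ e < z ∧ z < g ∧ EqvR H x e := by
  induction hxy with
  | rel a b hab =>
    intro z hz _
    have := redge_lt hH hab
    exact ⟨a, b, hab, by omega, by omega, EqvR.refl'⟩
  | refl a =>
    intro z hz _
    exact absurd hz (by omega)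
  | symm a b h ihh =>
    intro z hz hnz
    have hnaz : ¬ EqvR H a z := fun haz => hnz (EqvR.trans' (EqvR.symm' h) haz)
    obtain ⟨e, g, h1, h2, h3, h4⟩ := ihh z (Or.symm hz) hnaz
    exact ⟨e, g, h1, h2, h3, EqvR.trans' (EqvR.symm' h) h4⟩
  | trans a b c h1 h2 ih1 ih2 =>
    intro z hz hnz
    have hzb : z ≠ b := fun hh => hnz (hh ▸ h1)
    rcases (by omega : ((a < z ∧ z < b) ∨ (b < z ∧ z < a)) ∨
        ((b < z ∧ z < c) ∨ (c < z ∧ z < b))) with hcase | hcase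
    · exact ih1 z hcase hnz
    · have hnbz : ¬ EqvR H b z := fun hbz => hnz (EqvR.trans' h1 hbz)
      obtain ⟨e, g, he1, he2, he3, he4⟩ := ih2 z hcase hnbz
      exact ⟨e, g, he1, he2, he3, EqvR.trans' h1 he4⟩

lemma pinch {H : Set (ℤ × ℤ)} (hH : NCColl H) {e f g h c : ℤ} (hef : REdge H e f)
    (h1 : e < g) (h2 : g < f) (hgh : REdge H g h) (h3 : g < c) (h4 : c < h)
    (hce : EqvR H c e) : False := by
  have hh : e < h ∧ h < f := (closed_even hH hef (EqvR.rel' hgh)).mp ⟨h1, h2⟩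
  have := (closed_even hH hef hce).mp ⟨by omega, by omega⟩
  omega

-- ## fmap is well-behaved

lemma fmap_mem_iff {H : Set (ℤ × ℤ)} {B : Set ℤ} :
    B ∈ fmap H ↔ ∃ x : ℤ, B = {y | EqvR H x y} := Iff.rfl

lemma class_eq {H : Set (ℤ × ℤ)} {x y : ℤ} (hxy : EqvR H x y) :
    {w | EqvR H x w} = {w | EqvR H y w} :=
  Set.ext fun w => ⟨fun hw => EqvR.trans' (EqvR.symm' hxy) hw,
    fun hw => EqvR.trans' hxy hw⟩

lemma fmap_partition (H : Set (ℤ × ℤ)) : IsPartition (fmap H) := by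
  constructor
  · rintro B ⟨x, rfl⟩
    exact ⟨x, EqvR.refl'⟩
  · intro z
    refine ⟨{y | EqvR H z y}, ⟨⟨z, rfl⟩, EqvR.refl'⟩, ?_⟩
    rintro B ⟨⟨x, rfl⟩, hz⟩
    exact class_eq hz

lemma fmap_noncrossing {H : Set (ℤ × ℤ)} (hH : NCColl H) : Noncrossing (fmap H) := by
  rintro ⟨a, b, c, d, hab, hbc, hcd, B, hB, B', hB', hne, haB, hcB, hbB, hdB⟩
  obtain ⟨x, rfl⟩ := hB
  obtain ⟨x', rfl⟩ := hB'
  have hxa : EqvR H x a := haB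
  have hxc : EqvR H x c := hcB
  have hxb : EqvR H x' b := hbB
  have hxd : EqvR H x' d := hdB
  have hac : EqvR H a c := EqvR.trans' (EqvR.symm' hxa) hxc
  have hbd : EqvR H b d := EqvR.trans' (EqvR.symm' hxb) hxd
  have hnab : ¬ EqvR H a b := by
    intro hh
    apply hne
    calc {y | EqvR H x y} = {y | EqvR H a y} := class_eq hxa
    _ = {y | EqvR H b y} := class_eq hh
    _ = {y | EqvR H x' y} := (class_eq hxb).symm
  have hnbc : ¬ EqvR H b c := fun hh => hnab (EqvR.trans' hac (EqvR.symm' hh))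
  obtain ⟨e, f, hef, heb, hbf, hae⟩ := straddle hH hac b (Or.inl ⟨hab, hbc⟩) hnab
  obtain ⟨g, h, hgh, hgc, hch, hbg⟩ := straddle hH hbd c (Or.inl ⟨hbc, hcd⟩) hnbc
  have hef' := redge_lt hH hef
  have hgh' := redge_lt hH hgh
  rcases lt_trichotomy g e with hge | hge | hge
  · -- g < e : b strictly inside (g,h) but b ~ g
    have := (closed_even hH hgh hbg).mp ⟨by omega, by omega⟩
    omega
  · exact hnab (EqvR.trans' hae (EqvR.symm' (hge ▸ hbg)))
  · rcases lt_trichotomy g f with hgf | hgf | hgf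
    · exact pinch hH hef hge hgf hgh hgc hch
        (EqvR.trans' (EqvR.symm' hac) hae)
    · exact hnab (EqvR.trans' (EqvR.trans' hae (EqvR.rel' hef))
        (EqvR.symm' (hgf ▸ hbg)))
    · have hfc : EqvR H f c :=
        EqvR.trans' (EqvR.trans' (EqvR.symm' (EqvR.rel' hef)) hae.symm') hac
      have hnfg : ¬ EqvR H f g := by
        intro hh
        exact hnab (EqvR.trans' hae (EqvR.trans' (EqvR.rel' hef)
          (EqvR.trans' hh (EqvR.symm' hbg))).symm'.symm')
      obtain ⟨e', f', hef2, h1', h2', hfe'⟩ := straddle hH hfc g (Or.inl ⟨hgf, hgc⟩) hnfg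
      exact pinch hH hef2 h1' h2' hgh hgc hch
        (EqvR.trans' (EqvR.symm' hfc) hfe')


-- ## Decomposition of arcs

lemma arc_cases {H : Set (ℤ × ℤ)} (hH : NCColl H) {a : ℤ × ℤ} (ha : a ∈ H) :
    (∃ n p : ℤ, a = (2*p, 2*n+1)) ∨ (∃ m q : ℤ, a = (2*q+1, 2*m)) := by
  obtain ⟨k, hk⟩ := (hH.1 a ha).2
  rcases Int.even_or_odd a.1 with ⟨p, hp⟩ | ⟨p, hp⟩
  · exact Or.inl ⟨p - k - 1, p, Prod.ext (by omega) (by omega)⟩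
  · exact Or.inr ⟨p - k, p, Prod.ext (by omega) (by omega)⟩

-- ## Infinite blocks are unbounded

lemma fmap_unbounded {H : Set (ℤ × ℤ)} (hH : NCColl H) (hP : Pfct H) :
    ∀ B ∈ fmap H, B.Infinite → ¬ BddAbove B ∧ ¬ BddBelow B := by
  rintro B ⟨x, rfl⟩ hinf
  constructor
  · rintro ⟨b0, hb0⟩
    obtain ⟨M, hM, hMub⟩ := Int.exists_greatest_of_bdd (P := fun z => EqvR H x z)
      ⟨b0, fun z hz => hb0 hz⟩ ⟨x, EqvR.refl'⟩
    obtain ⟨a, ha, hcase⟩ := hP (2*M+1)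
    rcases arc_cases hH ha with ⟨n, p, rfl⟩ | ⟨m, q, rfl⟩
    · -- even-top arc at vertex 2M+1 : must be the bottom, giving p > M in the class
      simp only [Prod.mk.injEq] at hcase
      have hn : n = M := by omega
      rw [hn] at ha
      have hMp : EqvR H M p := EqvR.rel' ha
      have := redge_lt hH ha
      have := hMub p (EqvR.trans' hM hMp)
      omega
    · -- odd-top arc with top 2M+1 : the class is contained in [m, M]
      simp only [Prod.mk.injEq] at hcase
      have hq : q = M := by omega
      rw [hq] at ha
      have hpos := (hH.1 _ ha).1
      simp only at hpos
      have hsub : {y | EqvR H x y} ⊆ Set.Icc m M := by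
        intro y hy
        have hMy : EqvR H M y := EqvR.trans' (EqvR.symm' hM) hy
        have := (closed_odd hH ha hMy).mp ⟨by omega, le_refl M⟩
        exact ⟨this.1, this.2⟩
      exact hinf ((Set.finite_Icc m M).subset hsub)
  · rintro ⟨b0, hb0⟩
    obtain ⟨M, hM, hMlb⟩ := Int.exists_least_of_bdd (P := fun z => EqvR H x z)
      ⟨b0, fun z hz => hb0 hz⟩ ⟨x, EqvR.refl'⟩
    obtain ⟨a, ha, hcase⟩ := hP (2*M)
    rcases arc_cases hH ha with ⟨n, p, rfl⟩ | ⟨m, q, rfl⟩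
    · -- even-top arc at vertex 2M : must be the top, giving n < M in the class
      simp only [Prod.mk.injEq] at hcase
      have hpM : p = M := by omega
      rw [hpM] at ha
      have hMp : EqvR H n M := EqvR.rel' ha
      have := redge_lt hH ha
      have := hMlb n (EqvR.trans' hM (EqvR.symm' hMp))
      omega
    · -- odd-top arc with bottom 2M : the class is contained in [M, q]
      simp only [Prod.mk.injEq] at hcase
      have hmM : m = M := by omega
      rw [hmM] at ha
      have hpos := (hH.1 _ ha).1
      simp only at hpos
      have hsub : {y | EqvR H x y} ⊆ Set.Icc M q := by
        intro y hy
        have hMy : EqvR H M y := EqvR.trans' (EqvR.symm' hM) hy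
        have := (closed_odd hH ha hMy).mp ⟨le_refl M, by omega⟩
        exact ⟨this.1, this.2⟩
      exact hinf ((Set.finite_Icc M q).subset hsub)

-- ## The edge relation is determined by the equivalence relation

lemma rel_iff {H : Set (ℤ × ℤ)} (hH : NCColl H) (hP : Pfct H) (n p : ℤ) :
    REdge H n p ↔ (EqvR H n p ∧ n < p ∧ ∀ z, n < z → z < p → ¬ EqvR H n z) := by
  constructor
  · intro h
    refine ⟨EqvR.rel' h, redge_lt hH h, fun z hz1 hz2 hnz => ?_⟩
    have := (closed_even hH h (EqvR.symm' hnz)).mp ⟨hz1, hz2⟩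
    omega
  · rintro ⟨hnp, hlt, hadj⟩
    obtain ⟨a, ha, hcase⟩ := hP (2*n+1)
    rcases arc_cases hH ha with ⟨n', f, rfl⟩ | ⟨m, q, rfl⟩
    · simp only [Prod.mk.injEq] at hcase
      have hn : n' = n := by omega
      rw [hn] at ha
      have hf := redge_lt hH ha
      rcases lt_trichotomy f p with h' | h' | h'
      · exact absurd (EqvR.rel' ha) (hadj f hf h')
      · rwa [h'] at ha
      · have := (closed_even hH ha (EqvR.symm' hnp)).mp ⟨hlt, h'⟩
        omega
    · simp only [Prod.mk.injEq] at hcase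
      have hq : q = n := by omega
      rw [hq] at ha
      have := (closed_odd hH ha hnp).mp ⟨by have := (hH.1 _ ha).1; simp only at this; omega,
        le_refl n⟩
      omega


-- ## Injectivity: odd-top arcs are determined

lemma oddtop_step {H1 H2 : Set (ℤ × ℤ)} (h1 : NCColl H1) (hp1 : Pfct H1)
    (h2 : NCColl H2) (hp2 : Pfct H2)
    (hR : ∀ n p : ℤ, REdge H1 n p ↔ REdge H2 n p) {q m : ℤ}
    (IH : ∀ q' m' : ℤ, 0 < 2*q'+1 - 2*m' → 2*q'+1 - 2*m' < 2*q+1 - 2*m →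
      ((((2*q'+1, 2*m') : ℤ × ℤ) ∈ H1) ↔ (((2*q'+1, 2*m') : ℤ × ℤ) ∈ H2)))
    (hB : ((2*q+1, 2*m) : ℤ × ℤ) ∈ H1) : ((2*q+1, 2*m) : ℤ × ℤ) ∈ H2 := by
  have hmq : m ≤ q := by have := (h1.1 _ hB).1; simp only at this; omega
  -- find the arc of H2 at the vertex 2q+1
  obtain ⟨a, ha, hcase⟩ := hp2 (2*q+1)
  rcases arc_cases h2 ha with ⟨n', p', rfl⟩ | ⟨m₂, q₂, rfl⟩
  · -- even-top arc of H2 at 2q+1: must be its bottom; transfer to H1, share with B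
    exfalso
    simp only [Prod.mk.injEq] at hcase
    have hn : n' = q := by omega
    rw [hn] at ha
    have ha1 : ((2*p', 2*q+1) : ℤ × ℤ) ∈ H1 := (hR q p').mpr ha
    have hne : ((2*p', 2*q+1) : ℤ × ℤ) ≠ (2*q+1, 2*m) := by
      intro hh; rw [Prod.mk.injEq] at hh; omega
    exact (h1.2 _ ha1 _ hB hne).2 (by unfold ShareVertex; omega)
  · -- odd-top arc (2q₂+1, 2m₂) of H2 with 2q₂+1 = 2q+1
    simp only [Prod.mk.injEq] at hcase
    have hq2 : q₂ = q := by omega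
    rw [hq2] at ha
    have hm2q : m₂ ≤ q := by have := (h2.1 _ ha).1; simp only at this; omega
    rcases lt_trichotomy m m₂ with hmm | hmm | hmm
    · -- m < m₂ : look at the H1-arc at vertex 2m₂
      exfalso
      obtain ⟨c, hc, hcase'⟩ := hp1 (2*m₂)
      rcases arc_cases h1 hc with ⟨z, w, rfl⟩ | ⟨m₃, r, rfl⟩
      · -- even-top (2w, 2z+1) with 2w = 2m₂; transfer to H2, share with a
        simp only [Prod.mk.injEq] at hcase'
        have hw : w = m₂ := by omega
        rw [hw] at hc
        have hc2 : ((2*m₂, 2*z+1) : ℤ × ℤ) ∈ H2 := (hR z m₂).mp hc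
        have hne : ((2*m₂, 2*z+1) : ℤ × ℤ) ≠ (2*q+1, 2*m₂) := by
          intro hh; rw [Prod.mk.injEq] at hh; omega
        exact (h2.2 _ hc2 _ ha hne).2 (by unfold ShareVertex; omega)
      · -- odd-top (2r+1, 2m₃) with 2m₃ = 2m₂, nested strictly inside B
        simp only [Prod.mk.injEq] at hcase'
        have hm3 : m₃ = m₂ := by omega
        rw [hm3] at hc
        have hcpos := (h1.1 _ hc).1
        simp only at hcpos
        have hne : ((2*r+1, 2*m₂) : ℤ × ℤ) ≠ (2*q+1, 2*m) := by
          intro hh; rw [Prod.mk.injEq] at hh; omega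
        have hpair := h1.2 _ hc _ hB hne
        simp only [Cross, ShareVertex, not_or] at hpair
        have hrq : r < q := by omega
        have hc2 : ((2*r+1, 2*m₂) : ℤ × ℤ) ∈ H2 := (IH r m₂ (by omega) (by omega)).mp hc
        have hne2 : ((2*r+1, 2*m₂) : ℤ × ℤ) ≠ (2*q+1, 2*m₂) := by
          intro hh; rw [Prod.mk.injEq] at hh; omega
        exact (h2.2 _ hc2 _ ha hne2).2 (by unfold ShareVertex; omega)
    · rw [hmm]; exact ha
    · -- m₂ < m : look at the H2-arc at vertex 2m
      exfalso
      obtain ⟨c, hc, hcase'⟩ := hp2 (2*m)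
      rcases arc_cases h2 hc with ⟨z, w, rfl⟩ | ⟨m₃, r, rfl⟩
      · simp only [Prod.mk.injEq] at hcase'
        have hw : w = m := by omega
        rw [hw] at hc
        have hc1 : ((2*m, 2*z+1) : ℤ × ℤ) ∈ H1 := (hR z m).mpr hc
        have hne : ((2*m, 2*z+1) : ℤ × ℤ) ≠ (2*q+1, 2*m) := by
          intro hh; rw [Prod.mk.injEq] at hh; omega
        exact (h1.2 _ hc1 _ hB hne).2 (by unfold ShareVertex; omega)
      · simp only [Prod.mk.injEq] at hcase'
        have hm3 : m₃ = m := by omega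
        rw [hm3] at hc
        have hcpos := (h2.1 _ hc).1
        simp only at hcpos
        have hne : ((2*r+1, 2*m) : ℤ × ℤ) ≠ (2*q+1, 2*m₂) := by
          intro hh; rw [Prod.mk.injEq] at hh; omega
        have hpair := h2.2 _ hc _ ha hne
        simp only [Cross, ShareVertex, not_or] at hpair
        have hrq : r < q := by omega
        have hc1 : ((2*r+1, 2*m) : ℤ × ℤ) ∈ H1 := (IH r m (by omega) (by omega)).mpr hc
        have hne2 : ((2*r+1, 2*m) : ℤ × ℤ) ≠ (2*q+1, 2*m) := by
          intro hh; rw [Prod.mk.injEq] at hh; omega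
        exact (h1.2 _ hc1 _ hB hne2).2 (by unfold ShareVertex; omega)

lemma oddtop_mem {H1 H2 : Set (ℤ × ℤ)} (h1 : NCColl H1) (hp1 : Pfct H1)
    (h2 : NCColl H2) (hp2 : Pfct H2)
    (hR : ∀ n p : ℤ, REdge H1 n p ↔ REdge H2 n p) :
    ∀ L : ℕ, ∀ q m : ℤ, (2*q+1 - 2*m).toNat ≤ L →
      ((((2*q+1, 2*m) : ℤ × ℤ) ∈ H1) ↔ (((2*q+1, 2*m) : ℤ × ℤ) ∈ H2)) := by
  intro L
  induction L with
  | zero =>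
    intro q m hlen
    constructor
    · intro h; have := (h1.1 _ h).1; simp only at this; omega
    · intro h; have := (h2.1 _ h).1; simp only at this; omega
  | succ L ihL =>
    intro q m hlen
    have IH : ∀ q' m' : ℤ, 0 < 2*q'+1 - 2*m' → 2*q'+1 - 2*m' < 2*q+1 - 2*m →
        ((((2*q'+1, 2*m') : ℤ × ℤ) ∈ H1) ↔ (((2*q'+1, 2*m') : ℤ × ℤ) ∈ H2)) := by
      intro q' m' hpos hlt
      exact ihL q' m' (by omega)
    constructor
    · exact oddtop_step h1 hp1 h2 hp2 hR IH
    · exact oddtop_step h2 hp2 h1 hp1 (fun n p => (hR n p).symm)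
        (fun q' m' hh hh' => (IH q' m' hh hh').symm)

-- ## Injectivity

lemma eqv_eq_of_fmap_eq {H1 H2 : Set (ℤ × ℤ)} (hF : fmap H1 = fmap H2) :
    ∀ x y : ℤ, EqvR H1 x y ↔ EqvR H2 x y := by
  have key : ∀ (K1 K2 : Set (ℤ × ℤ)), fmap K1 = fmap K2 →
      ∀ x y : ℤ, EqvR K1 x y → EqvR K2 x y := by
    intro K1 K2 hK x y hxy
    have hmem : {w | EqvR K1 x w} ∈ fmap K2 := by
      rw [← hK]; exact ⟨x, rfl⟩
    obtain ⟨x', hx'⟩ := hmem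
    have hx : EqvR K2 x' x := by
      have : x ∈ {w | EqvR K1 x w} := EqvR.refl'
      rw [hx'] at this; exact this
    have hy : EqvR K2 x' y := by
      have : y ∈ {w | EqvR K1 x w} := hxy
      rw [hx'] at this; exact this
    exact EqvR.trans' (EqvR.symm' hx) hy
  exact fun x y => ⟨key H1 H2 hF x y, key H2 H1 hF.symm x y⟩

lemma subset_of_fmap_eq {H1 H2 : Set (ℤ × ℤ)} (h1 : RiedtmannM1 H1)
    (h2 : RiedtmannM1 H2) (hF : fmap H1 = fmap H2) : H1 ⊆ H2 := by
  have hn1 : NCColl H1 := h1.1.1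
  have hn2 : NCColl H2 := h2.1.1
  have hpf1 : Pfct H1 := perfect_of_riedtmann h1
  have hpf2 : Pfct H2 := perfect_of_riedtmann h2
  have heqv := eqv_eq_of_fmap_eq hF
  have hR : ∀ n p : ℤ, REdge H1 n p ↔ REdge H2 n p := by
    intro n p
    rw [rel_iff hn1 hpf1, rel_iff hn2 hpf2]
    constructor
    · rintro ⟨ha, hb, hc⟩
      exact ⟨(heqv n p).mp ha, hb, fun z hz1 hz2 hz3 => hc z hz1 hz2 ((heqv n z).mpr hz3)⟩
    · rintro ⟨ha, hb, hc⟩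
      exact ⟨(heqv n p).mpr ha, hb, fun z hz1 hz2 hz3 => hc z hz1 hz2 ((heqv n z).mp hz3)⟩
  intro a ha
  rcases arc_cases hn1 ha with ⟨n, p, rfl⟩ | ⟨m, q, rfl⟩
  · exact (hR n p).mp ha
  · exact (oddtop_mem hn1 hpf1 hn2 hpf2 hR (2*q+1 - 2*m).toNat q m (le_refl _)).mp ha


-- ## Surjectivity: the inverse construction

def gmap (P : Set (Set ℤ)) : Set (ℤ × ℤ) :=
  {a | ∃ B ∈ P, (∃ n p : ℤ, n ∈ B ∧ p ∈ B ∧ n < p ∧ (∀ z ∈ B, ¬(n < z ∧ z < p)) ∧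
        a = (2*p, 2*n+1)) ∨
      (∃ m q : ℤ, IsLeast B m ∧ IsGreatest B q ∧ a = (2*q+1, 2*m))}

lemma block_eq {P : Set (Set ℤ)} (hP : IsPartition P) {B B' : Set ℤ} (hB : B ∈ P)
    (hB' : B' ∈ P) {z : ℤ} (hz : z ∈ B) (hz' : z ∈ B') : B = B' :=
  (hP.2 z).unique ⟨hB, hz⟩ ⟨hB', hz'⟩

lemma nc4 {P : Set (Set ℤ)} (hNC : Noncrossing P) {B B' : Set ℤ} (hB : B ∈ P)
    (hB' : B' ∈ P) (hne : B ≠ B') {a b c d : ℤ} (ha : a ∈ B) (hc : c ∈ B)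
    (hb : b ∈ B') (hd : d ∈ B') (h1 : a < b) (h2 : b < c) (h3 : c < d) : False :=
  hNC ⟨a, b, c, d, h1, h2, h3, B, hB, B', hB', hne, ha, hc, hb, hd⟩

lemma pair11 {P : Set (Set ℤ)} (hP : IsPartition P) (hNC : Noncrossing P)
    {B B' : Set ℤ} (hB : B ∈ P) (hB' : B' ∈ P) {n p n' p' : ℤ}
    (hn : n ∈ B) (hp : p ∈ B) (hnp : n < p) (hcons : ∀ z ∈ B, ¬(n < z ∧ z < p))
    (hn' : n' ∈ B') (hp' : p' ∈ B') (hnp' : n' < p')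
    (hcons' : ∀ z ∈ B', ¬(n' < z ∧ z < p')) (hne : ¬(n = n' ∧ p = p')) :
    ¬ Cross (2*p, 2*n+1) (2*p', 2*n'+1) ∧
      ¬ ShareVertex (2*p, 2*n+1) (2*p', 2*n'+1) := by
  constructor
  · intro hc
    simp only [Cross] at hc
    rcases hc with ⟨h1, h2, h3⟩ | ⟨h1, h2, h3⟩
    · -- n < n' < p < p'
      by_cases hBB : B = B'
      · exact hcons n' (hBB ▸ hn') (by omega)
      · exact nc4 hNC hB hB' hBB hn hp hn' hp' (by omega) (by omega) (by omega)
    · -- n' < n < p' < p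
      by_cases hBB : B' = B
      · exact hcons' n (hBB ▸ hn) (by omega)
      · exact nc4 hNC hB' hB hBB hn' hp' hn hp (by omega) (by omega) (by omega)
  · intro hs
    simp only [ShareVertex] at hs
    rcases hs with h | h | h | h
    · have hpp : p = p' := by omega
      have hBB : B = B' := block_eq hP hB hB' hp (hpp ▸ hp')
      rcases lt_trichotomy n n' with h' | h' | h'
      · exact hcons n' (hBB ▸ hn') (by omega)
      · exact hne ⟨h', by omega⟩
      · exact hcons' n (hBB ▸ hn) (by omega)
    · omega
    · omega
    · have hnn : n = n' := by omega
      have hBB : B = B' := block_eq hP hB hB' hn (hnn ▸ hn')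
      rcases lt_trichotomy p p' with h' | h' | h'
      · exact hcons' p (hBB ▸ hp) (by omega)
      · exact hne ⟨hnn, h'⟩
      · exact hcons p' (hBB ▸ hp') (by omega)

lemma pair12 {P : Set (Set ℤ)} (hP : IsPartition P) (hNC : Noncrossing P)
    {B B' : Set ℤ} (hB : B ∈ P) (hB' : B' ∈ P) {n p m q : ℤ}
    (hn : n ∈ B) (hp : p ∈ B) (hnp : n < p) (hcons : ∀ z ∈ B, ¬(n < z ∧ z < p))
    (hm : IsLeast B' m) (hq : IsGreatest B' q) :
    ¬ Cross (2*p, 2*n+1) (2*q+1, 2*m) ∧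
      ¬ ShareVertex (2*p, 2*n+1) (2*q+1, 2*m) := by
  constructor
  · intro hc
    simp only [Cross] at hc
    rcases hc with ⟨h1, h2, h3⟩ | ⟨h1, h2, h3⟩
    · -- n < m ≤ q, m < p ≤ q
      by_cases hBB : B = B'
      · have := hm.2 (hBB ▸ hn)
        omega
      · by_cases hpq : p = q
        · exact hBB (block_eq hP hB hB' hp (hpq ▸ hq.1))
        · exact nc4 hNC hB hB' hBB hn hp hm.1 hq.1 (by omega) (by omega) (by omega)
    · -- m ≤ n < q < p
      by_cases hBB : B = B'
      · have := hq.2 (hBB ▸ hp)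
        omega
      · by_cases hmn : m = n
        · exact hBB (block_eq hP hB hB' hn (hmn ▸ hm.1))
        · exact nc4 hNC hB' hB (fun hh => hBB hh.symm) hm.1 hq.1 hn hp
            (by omega) (by omega) (by omega)
  · intro hs
    simp only [ShareVertex] at hs
    rcases hs with h | h | h | h
    · omega
    · have hpm : p = m := by omega
      have hBB : B = B' := block_eq hP hB hB' hp (hpm ▸ hm.1)
      have := hm.2 (hBB ▸ hn)
      omega
    · have hnq : n = q := by omega
      have hBB : B = B' := block_eq hP hB hB' hn (hnq ▸ hq.1)
      have := hq.2 (hBB ▸ hp)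
      omega
    · omega

lemma pair22 {P : Set (Set ℤ)} (hP : IsPartition P) (hNC : Noncrossing P)
    {B B' : Set ℤ} (hB : B ∈ P) (hB' : B' ∈ P) {m q m' q' : ℤ}
    (hm : IsLeast B m) (hq : IsGreatest B q) (hm' : IsLeast B' m')
    (hq' : IsGreatest B' q') (hne : ¬(m = m' ∧ q = q')) :
    ¬ Cross (2*q+1, 2*m) (2*q'+1, 2*m') ∧
      ¬ ShareVertex (2*q+1, 2*m) (2*q'+1, 2*m') := by
  have hmq : m ≤ q := hm.2 hq.1
  have hmq' : m' ≤ q' := hm'.2 hq'.1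
  constructor
  · intro hc
    simp only [Cross] at hc
    rcases hc with ⟨h1, h2, h3⟩ | ⟨h1, h2, h3⟩
    · -- m < m' ≤ q < q'
      by_cases hBB : B = B'
      · have := hq.2 (hBB ▸ hq'.1 : q' ∈ B)
        omega
      · by_cases hmq2 : m' = q
        · exact hBB (block_eq hP hB hB' hq.1 (hmq2 ▸ hm'.1))
        · exact nc4 hNC hB hB' hBB hm.1 hq.1 hm'.1 hq'.1 (by omega) (by omega)
            (by omega)
    · -- m' < m ≤ q' < q
      by_cases hBB : B = B'
      · have := hq'.2 (hBB ▸ hq.1 : q ∈ B')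
        omega
      · by_cases hmq2 : m = q'
        · exact hBB (block_eq hP hB hB' hm.1 (hmq2 ▸ hq'.1))
        · exact nc4 hNC hB' hB (fun hh => hBB hh.symm) hm'.1 hq'.1 hm.1 hq.1
            (by omega) (by omega) (by omega)
  · intro hs
    simp only [ShareVertex] at hs
    rcases hs with h | h | h | h
    · have hqq : q = q' := by omega
      have hBB : B = B' := block_eq hP hB hB' hq.1 (hqq ▸ hq'.1)
      have h1 := hm.2 (hBB ▸ hm'.1 : m' ∈ B)
      have h2 := hm'.2 (hBB ▸ hm.1 : m ∈ B')
      exact hne ⟨by omega, hqq⟩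
    · omega
    · omega
    · have hmm : m = m' := by omega
      have hBB : B = B' := block_eq hP hB hB' hm.1 (hmm ▸ hm'.1)
      have h1 := hq.2 (hBB ▸ hq'.1 : q' ∈ B)
      have h2 := hq'.2 (hBB ▸ hq.1 : q ∈ B')
      exact hne ⟨hmm, by omega⟩

lemma gmap_nccoll {P : Set (Set ℤ)} (hP : IsPartition P) (hNC : Noncrossing P) :
    NCColl (gmap P) := by
  constructor
  · rintro a ⟨B, hB, ⟨n, p, hn, hp, hnp, hcons, rfl⟩ | ⟨m, q, hm, hq, rfl⟩⟩
    · exact ⟨by omega, Int.odd_iff.mpr (by omega)⟩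
    · have : m ≤ q := hm.2 hq.1
      exact ⟨by omega, Int.odd_iff.mpr (by omega)⟩
  · rintro a ⟨B, hB, ha⟩ b ⟨B', hB', hb⟩ hne
    rcases ha with ⟨n, p, hn, hp, hnp, hcons, rfl⟩ | ⟨m, q, hm, hq, rfl⟩
    · rcases hb with ⟨n', p', hn', hp', hnp', hcons', rfl⟩ | ⟨m', q', hm', hq', rfl⟩
      · exact pair11 hP hNC hB hB' hn hp hnp hcons hn' hp' hnp' hcons'
          (fun hh => hne (by rw [hh.1, hh.2]))
      · exact pair12 hP hNC hB hB' hn hp hnp hcons hm' hq'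
    · rcases hb with ⟨n', p', hn', hp', hnp', hcons', rfl⟩ | ⟨m', q', hm', hq', rfl⟩
      · have := pair12 hP hNC hB' hB hn' hp' hnp' hcons' hm hq
        exact ⟨fun h => this.1 h.symm', fun h => this.2 h.symm'⟩
      · exact pair22 hP hNC hB hB' hm hq hm' hq'
          (fun hh => hne (by rw [hh.1, hh.2]))

lemma gmap_perfect {P : Set (Set ℤ)} (hP : IsPartition P)
    (hU : ∀ B ∈ P, B.Infinite → ¬ BddAbove B ∧ ¬ BddBelow B) : Pfct (gmap P) := by
  intro v
  rcases Int.even_or_odd v with ⟨n, hn⟩ | ⟨n, hn⟩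
  · -- v = 2n even
    obtain ⟨B, ⟨hB, hnB⟩, -⟩ := hP.2 n
    by_cases hbelow : ∃ z, z ∈ B ∧ z < n
    · obtain ⟨w, ⟨hwB, hwn⟩, hwub⟩ := Int.exists_greatest_of_bdd
        (P := fun z => z ∈ B ∧ z < n) ⟨n, fun z hz => by omega⟩ hbelow
      refine ⟨(2*n, 2*w+1), ⟨B, hB, Or.inl ⟨w, n, hwB, hnB, hwn, ?_, rfl⟩⟩,
        Or.inl (by omega)⟩
      intro z hz hcon
      have := hwub z ⟨hz, hcon.2⟩
      omega
    · push_neg at hbelow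
      have hleast : IsLeast B n := ⟨hnB, fun z hz => by have := hbelow z hz; omega⟩
      have hfin : B.Finite := by
        by_contra hinf
        exact (hU B hB hinf).2
          ⟨n, fun z hz => hleast.2 hz⟩
      obtain ⟨b0, hb0⟩ := hfin.bddAbove
      obtain ⟨qq, hqq, hqub⟩ := Int.exists_greatest_of_bdd (P := fun z => z ∈ B)
        ⟨b0, fun z hz => hb0 hz⟩ ⟨n, hnB⟩
      exact ⟨(2*qq+1, 2*n), ⟨B, hB, Or.inr ⟨n, qq, hleast,
        ⟨hqq, fun z hz => hqub z hz⟩, rfl⟩⟩, Or.inr (by omega)⟩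
  · -- v = 2n+1 odd
    obtain ⟨B, ⟨hB, hnB⟩, -⟩ := hP.2 n
    by_cases habove : ∃ z, z ∈ B ∧ n < z
    · obtain ⟨p, ⟨hpB, hnp⟩, hplb⟩ := Int.exists_least_of_bdd
        (P := fun z => z ∈ B ∧ n < z) ⟨n, fun z hz => by omega⟩ habove
      refine ⟨(2*p, 2*n+1), ⟨B, hB, Or.inl ⟨n, p, hnB, hpB, hnp, ?_, rfl⟩⟩,
        Or.inr (by omega)⟩
      intro z hz hcon
      have := hplb z ⟨hz, hcon.1⟩
      omega
    · push_neg at habove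
      have hgreat : IsGreatest B n := ⟨hnB, fun z hz => by have := habove z hz; omega⟩
      have hfin : B.Finite := by
        by_contra hinf
        exact (hU B hB hinf).1
          ⟨n, fun z hz => hgreat.2 hz⟩
      obtain ⟨b0, hb0⟩ := hfin.bddBelow
      obtain ⟨mm, hmm, hmlb⟩ := Int.exists_least_of_bdd (P := fun z => z ∈ B)
        ⟨b0, fun z hz => hb0 hz⟩ ⟨n, hnB⟩
      exact ⟨(2*n+1, 2*mm), ⟨B, hB, Or.inr ⟨mm, n, ⟨hmm, fun z hz => hmlb z hz⟩,
        hgreat, rfl⟩⟩, Or.inl (by omega)⟩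

lemma rel_gmap {P : Set (Set ℤ)} {n p : ℤ} :
    REdge (gmap P) n p ↔
      ∃ B ∈ P, n ∈ B ∧ p ∈ B ∧ n < p ∧ ∀ z ∈ B, ¬(n < z ∧ z < p) := by
  constructor
  · rintro ⟨B, hB, ⟨n', p', h1, h2, h3, h4, heq⟩ | ⟨m, q, hm, hq, heq⟩⟩
    · rw [Prod.mk.injEq] at heq
      obtain rfl : p' = p := by omega
      obtain rfl : n' = n := by omega
      exact ⟨B, hB, h1, h2, h3, h4⟩
    · rw [Prod.mk.injEq] at heq
      exact absurd heq.1 (by omega)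
  · rintro ⟨B, hB, h1, h2, h3, h4⟩
    exact ⟨B, hB, Or.inl ⟨n, p, h1, h2, h3, h4, rfl⟩⟩

lemma eqv_gmap_mp {P : Set (Set ℤ)} (hP : IsPartition P) {x y : ℤ}
    (h : EqvR (gmap P) x y) : ∃ B ∈ P, x ∈ B ∧ y ∈ B := by
  induction h with
  | rel a b hab =>
    obtain ⟨B, hB, h1, h2, -, -⟩ := rel_gmap.mp hab
    exact ⟨B, hB, h1, h2⟩
  | refl a =>
    obtain ⟨B, ⟨hB, ha⟩, -⟩ := hP.2 a
    exact ⟨B, hB, ha, ha⟩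
  | symm a b h ih =>
    obtain ⟨B, hB, h1, h2⟩ := ih
    exact ⟨B, hB, h2, h1⟩
  | trans a b c h1 h2 ih1 ih2 =>
    obtain ⟨B, hB, ha, hb⟩ := ih1
    obtain ⟨B', hB', hb', hc⟩ := ih2
    rw [block_eq hP hB' hB hb' hb] at hc
    exact ⟨B, hB, ha, hc⟩

lemma eqv_gmap_mpr {P : Set (Set ℤ)} (hP : IsPartition P) {B : Set ℤ} (hB : B ∈ P) :
    ∀ k : ℕ, ∀ x y : ℤ, x ∈ B → y ∈ B → x ≤ y → (y - x).toNat = k →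
      EqvR (gmap P) x y := by
  intro k
  induction k using Nat.strong_induction_on with
  | _ k ih =>
    intro x y hx hy hxy hk
    rcases eq_or_lt_of_le hxy with rfl | hlt
    · exact EqvR.refl'
    · obtain ⟨p, ⟨hpB, hxp⟩, hplb⟩ := Int.exists_least_of_bdd
        (P := fun z => z ∈ B ∧ x < z) ⟨x+1, fun z hz => by omega⟩ ⟨y, hy, hlt⟩
      have hre : REdge (gmap P) x p := rel_gmap.mpr ⟨B, hB, hx, hpB, hxp,
        fun z hz hcon => by have := hplb z ⟨hz, hcon.1⟩; omega⟩
      have hpy : p ≤ y := hplb y ⟨hy, hlt⟩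
      exact EqvR.trans' (EqvR.rel' hre) (ih (y - p).toNat (by omega) p y hpB hy hpy rfl)

lemma eqv_gmap {P : Set (Set ℤ)} (hP : IsPartition P) {x y : ℤ} :
    EqvR (gmap P) x y ↔ ∃ B ∈ P, x ∈ B ∧ y ∈ B := by
  constructor
  · exact eqv_gmap_mp hP
  · rintro ⟨B, hB, hx, hy⟩
    rcases le_total x y with h | h
    · exact eqv_gmap_mpr hP hB (y - x).toNat x y hx hy h rfl
    · exact EqvR.symm' (eqv_gmap_mpr hP hB (x - y).toNat y x hy hx h rfl)

lemma fmap_gmap {P : Set (Set ℤ)} (hP : IsPartition P) : fmap (gmap P) = P := by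
  ext B
  rw [fmap_mem_iff]
  constructor
  · rintro ⟨x, rfl⟩
    obtain ⟨Bx, ⟨hBx, hxBx⟩, -⟩ := hP.2 x
    have hcl : {y | EqvR (gmap P) x y} = Bx := by
      ext y
      simp only [Set.mem_setOf_eq]
      rw [eqv_gmap hP]
      constructor
      · rintro ⟨B', hB', hx', hy'⟩
        rwa [block_eq hP hB' hBx hx' hxBx] at hy'
      · intro hy
        exact ⟨Bx, hBx, hxBx, hy⟩
    rw [hcl]
    exact hBx
  · intro hB
    obtain ⟨x, hx⟩ := hP.1 B hB
    refine ⟨x, ?_⟩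
    ext y
    simp only [Set.mem_setOf_eq]
    rw [eqv_gmap hP]
    constructor
    · intro hy
      exact ⟨B, hB, hx, hy⟩
    · rintro ⟨B', hB', hx', hy'⟩
      rwa [block_eq hP hB' hB hx' hx] at hy'


/-- Proposition 7.3: `f` restricts to a bijection from the set of `|-1|`-Riedtmann
configurations onto the set of noncrossing partitions of `ℤ` whose infinite block, if
it exists, is bounded neither above nor below. -/
theorem stmt18 :
    Set.BijOn fmap {H | RiedtmannM1 H}
      {P | IsPartition P ∧ Noncrossing P ∧
        ∀ B ∈ P, B.Infinite → ¬ BddAbove B ∧ ¬ BddBelow B} := by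
  refine ⟨?_, ?_, ?_⟩
  · intro H hH
    have hR : RiedtmannM1 H := hH
    have hnc : NCColl H := hR.1.1
    have hpf : Pfct H := perfect_of_riedtmann hR
    exact ⟨fmap_partition H, fmap_noncrossing hnc, fmap_unbounded hnc hpf⟩
  · intro H1 h1 H2 h2 hF
    exact Set.Subset.antisymm (subset_of_fmap_eq h1 h2 hF)
      (subset_of_fmap_eq h2 h1 hF.symm)
  · rintro P ⟨hPart, hNC, hU⟩
    exact ⟨gmap P, riedtmann_of_perfect (gmap_nccoll hPart hNC)
      (gmap_perfect hPart hU), fmap_gmap hPart⟩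

end NegOneCY
end
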